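/- Let h(r)=f(r)+r g(r) with f Lipschitz and g bounded Lipschitz. If |ε|_∞ ≤ 1/2 then (R_ε − R̃_ε)h(r) = f_ε(r) + r g_ε(r) with |f_ε|_∞ ≤ C(Lip(f)+|g|_∞)|ε|_∞^2 and |g_ε|_∞ ≤ C Lip(g)|ε|_∞^2, for a universal constant C. -/

import Mathlib

/-!
The series `Σ_ℓ 2^{-ℓ} (ε_{r,ℓ} - ε̃_{r,ℓ})` telescopes: its partial sums are
`-2^{-L} (∏_{i≤L} (1 + ε_{r+i}) - 1 - Σ_{i≤L} ε_{r+i})`, which tend to `0`. So `R_ε - R̃_ε`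
annihilates constants, and `(R_ε - R̃_ε) h (r)` is the series of
`(h (r+ℓ) - h r) 2^{-ℓ} (ε_{r,ℓ} - ε̃_{r,ℓ})`. For `h = f + r g` the increment splits as
`(f (r+ℓ) - f r + ℓ g (r+ℓ)) + r (g (r+ℓ) - g r)`, of size `(Lip f + |g|_∞) ℓ` and `r Lip g ℓ`.
Linearizing a product of `ℓ` factors `1 + y` with `|y| ≤ E` costs at most `ℓ² E² (1 + E)^ℓ`, so
with `E ≤ 1/2` both series are bounded by `E² Σ ℓ³ (3/4)^ℓ` times those constants.
-/

/-- The cookie transition operator `Q_ε`. -/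
noncomputable def Qeps (ε : ℕ → ℝ) (f : ℕ → ℝ) (r : ℕ) : ℝ :=
  ∑' ℓ : ℕ, f (r + ℓ + 1) *
    ((2 : ℝ) ^ (-(ℓ + 1 : ℤ)) * (∏ i ∈ Finset.range ℓ, (1 + ε (r + i + 1)))
      * (1 - ε (r + ℓ + 1)))

/-- The geometric(1/2) transition operator `Q_0`. -/
noncomputable def Q0 (f : ℕ → ℝ) (r : ℕ) : ℝ :=
  ∑' ℓ : ℕ, f (r + ℓ + 1) * (2 : ℝ) ^ (-(ℓ + 1 : ℤ))

/-- The linearized operator `R̃_ε`. -/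
noncomputable def Rtilde (ε : ℕ → ℝ) (f : ℕ → ℝ) (r : ℕ) : ℝ :=
  ∑' ℓ : ℕ, f (r + ℓ + 1) * (2 : ℝ) ^ (-(ℓ + 1 : ℤ)) *
    (-ε (r + ℓ + 1) + ∑ i ∈ Finset.range ℓ, ε (r + i + 1))

open Finset Filter Topology

lemma abs_sum_range_le {y : ℕ → ℝ} {E : ℝ} (hy : ∀ i, |y i| ≤ E) (n : ℕ) :
    |∑ i ∈ range n, y i| ≤ n * E := by
  simpa using norm_sum_le_of_le (range n) (fun i _ => (Real.norm_eq_abs (y i)).trans_le (hy i))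

lemma abs_mul_one_add_add_mul_le {d y S E : ℝ} {n : ℕ} (hE : 0 ≤ E)
    (hd : |d| ≤ n ^ 2 * E ^ 2 * (1 + E) ^ n) (hy : |y| ≤ E) (hS : |S| ≤ n * E) :
    |d * (1 + y) + y * S| ≤ (n + 1) ^ 2 * E ^ 2 * (1 + E) ^ (n + 1) := by
  have h1y : |1 + y| ≤ 1 + E := (abs_add_le 1 y).trans (by rw [abs_one]; linarith)
  have hpow : 1 ≤ (1 + E) ^ (n + 1) := one_le_pow₀ (by linarith)
  have hcoef : (0 : ℝ) ≤ (2 * n + 1) * E ^ 2 := by positivity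
  calc |d * (1 + y) + y * S| ≤ |d| * |1 + y| + |y| * |S| := by
        rw [← abs_mul, ← abs_mul]; exact abs_add_le _ _
    _ ≤ n ^ 2 * E ^ 2 * (1 + E) ^ (n + 1) + E * (n * E) := by
        rw [pow_succ (1 + E) n, ← mul_assoc]; gcongr
    _ ≤ (n + 1) ^ 2 * E ^ 2 * (1 + E) ^ (n + 1) := by
        nlinarith [mul_le_mul_of_nonneg_left hpow hcoef]

lemma abs_prod_one_add_sub_one_add_sum_le {y : ℕ → ℝ} {E : ℝ} (hE : 0 ≤ E)
    (hy : ∀ i, |y i| ≤ E) (n : ℕ) :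
    |∏ i ∈ range n, (1 + y i) - (1 + ∑ i ∈ range n, y i)| ≤ n ^ 2 * E ^ 2 * (1 + E) ^ n := by
  induction n with
  | zero => simp
  | succ n ih =>
    have hsucc : ∏ i ∈ range (n + 1), (1 + y i) - (1 + ∑ i ∈ range (n + 1), y i)
        = (∏ i ∈ range n, (1 + y i) - (1 + ∑ i ∈ range n, y i)) * (1 + y n)
          + y n * ∑ i ∈ range n, y i := by
      rw [prod_range_succ, sum_range_succ]; ring
    rw [hsucc]
    exact_mod_cast abs_mul_one_add_add_mul_le hE ih (hy n) (abs_sum_range_le hy n)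

lemma two_zpow_neg_succ (ℓ : ℕ) : (2 : ℝ) ^ (-(ℓ + 1 : ℤ)) = (1 / 2) ^ (ℓ + 1) := by
  rw [zpow_neg, ← Nat.cast_succ, zpow_natCast, one_div, inv_pow]

lemma summable_succ_pow_mul_geometric (k : ℕ) {q : ℝ} (hq0 : 0 ≤ q) (hq : q < 1) :
    Summable fun n : ℕ => ((n : ℝ) + 1) ^ k * q ^ (n + 1) := by
  have := (summable_nat_add_iff 1).mpr
    (summable_pow_mul_geometric_of_norm_lt_one k (r := q) (by rwa [Real.norm_of_nonneg hq0]))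
  simpa using this

/-- `2^{-(ℓ+1)} (ε_{r,ℓ+1} - ε̃_{r,ℓ+1})`: the paper's jump length `ℓ ≥ 1` is `ℓ + 1` here. -/
noncomputable def cookieDefect (ε : ℕ → ℝ) (r ℓ : ℕ) : ℝ :=
  (2 : ℝ) ^ (-(ℓ + 1 : ℤ)) * ((∏ i ∈ range ℓ, (1 + ε (r + i + 1))) * (1 - ε (r + ℓ + 1)) - 1
    - (-ε (r + ℓ + 1) + ∑ i ∈ range ℓ, ε (r + i + 1)))

section CookieDefect

variable {ε : ℕ → ℝ} {E : ℝ}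

lemma abs_cookieDefect_le (hE : 0 ≤ E) (hε : ∀ i, |ε i| ≤ E) (r ℓ : ℕ) :
    |cookieDefect ε r ℓ| ≤ E ^ 2 * (((ℓ : ℝ) + 1) ^ 2 * ((1 + E) / 2) ^ (ℓ + 1)) := by
  set a := ε (r + ℓ + 1)
  set p := ∏ i ∈ range ℓ, (1 + ε (r + i + 1))
  set S := ∑ i ∈ range ℓ, ε (r + i + 1)
  have hlin : p * (1 - a) - 1 - (-a + S) = (p - (1 + S)) * (1 + -a) + -a * S := by ring
  have hbound := abs_mul_one_add_add_mul_le hE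
    (abs_prod_one_add_sub_one_add_sum_le hE (fun i => hε (r + i + 1)) ℓ)
    ((abs_neg a).trans_le (hε _)) (abs_sum_range_le (fun i => hε (r + i + 1)) ℓ)
  rw [cookieDefect, two_zpow_neg_succ, abs_mul, abs_of_pos (by positivity), hlin]
  calc (1 / 2) ^ (ℓ + 1) * |(p - (1 + S)) * (1 + -a) + -a * S|
      ≤ (1 / 2) ^ (ℓ + 1) * ((ℓ + 1) ^ 2 * E ^ 2 * (1 + E) ^ (ℓ + 1)) := by gcongr
    _ = E ^ 2 * (((ℓ : ℝ) + 1) ^ 2 * ((1 + E) / 2) ^ (ℓ + 1)) := by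
        simp only [div_pow, one_pow]; ring

lemma hasSum_cookieDefect (hE : E < 1) (hε : ∀ i, |ε i| ≤ E) (r : ℕ) :
    HasSum (cookieDefect ε r) 0 := by
  have hE0 : 0 ≤ E := (abs_nonneg _).trans (hε 0)
  set a : ℕ → ℝ := fun ℓ =>
    (1 / 2) ^ ℓ * (∏ i ∈ range ℓ, (1 + ε (r + i + 1)) - (1 + ∑ i ∈ range ℓ, ε (r + i + 1)))
  have htelescope : ∀ ℓ, cookieDefect ε r ℓ = a ℓ - a (ℓ + 1) := fun ℓ => by
    simp only [a, cookieDefect, two_zpow_neg_succ, prod_range_succ, sum_range_succ, pow_succ]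
    ring
  have hsummable : Summable (cookieDefect ε r) :=
    .of_norm_bounded ((summable_succ_pow_mul_geometric 2 (by positivity) (by linarith)).mul_left _)
      fun ℓ => (Real.norm_eq_abs _).trans_le (abs_cookieDefect_le hE0 hε r ℓ)
  have ha : Tendsto a atTop (𝓝 0) := by
    have hmajorant : Tendsto (fun ℓ : ℕ => E ^ 2 * (ℓ ^ 2 * ((1 + E) / 2) ^ ℓ)) atTop (𝓝 0) := by
      simpa using (tendsto_pow_const_mul_const_pow_of_abs_lt_one 2
        (r := (1 + E) / 2) (by rw [abs_of_nonneg (by positivity)]; linarith)).const_mul (E ^ 2)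
    refine squeeze_zero_norm (fun ℓ => ?_) hmajorant
    rw [Real.norm_eq_abs, abs_mul, abs_of_pos (by positivity)]
    calc (1 / 2) ^ ℓ * |∏ i ∈ range ℓ, (1 + ε (r + i + 1)) - (1 + ∑ i ∈ range ℓ, ε (r + i + 1))|
        ≤ (1 / 2) ^ ℓ * (ℓ ^ 2 * E ^ 2 * (1 + E) ^ ℓ) := by
          gcongr; exact abs_prod_one_add_sub_one_add_sum_le hE0 (fun i => hε (r + i + 1)) ℓ
      _ = E ^ 2 * (ℓ ^ 2 * ((1 + E) / 2) ^ ℓ) := by simp only [div_pow, one_pow]; ring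
  rw [hsummable.hasSum_iff_tendsto_nat]
  simp_rw [htelescope, sum_range_sub']
  simpa [a] using ha.const_sub (a 0)

lemma abs_cookieDefect_le_iSup (hε : ∀ i, |ε i| ≤ 1 / 2) (r ℓ : ℕ) :
    |cookieDefect ε r ℓ| ≤ (⨆ j, |ε j|) ^ 2 * (((ℓ : ℝ) + 1) ^ 2 * (3 / 4) ^ (ℓ + 1)) := by
  have hle : ∀ i, |ε i| ≤ ⨆ j, |ε j| := le_ciSup ⟨1 / 2, Set.forall_mem_range.2 hε⟩
  have hsup : ⨆ j, |ε j| ≤ 1 / 2 := ciSup_le hε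
  have hsup0 : 0 ≤ ⨆ j, |ε j| := (abs_nonneg _).trans (hle 0)
  refine (abs_cookieDefect_le hsup0 hle r ℓ).trans ?_
  gcongr _ * (_ * ?_)
  exact pow_le_pow_left₀ (by linarith) (by linarith) _

end CookieDefect

section LinearTimesGeometric

variable {a c : ℕ → ℝ} {A B : ℝ}

lemma norm_mul_le_of_linear_of_geometric (ha : ∀ ℓ, |a ℓ| ≤ A * ((ℓ : ℝ) + 1))
    (hc : ∀ ℓ, |c ℓ| ≤ B * (((ℓ : ℝ) + 1) ^ 2 * (3 / 4) ^ (ℓ + 1))) (ℓ : ℕ) :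
    ‖a ℓ * c ℓ‖ ≤ A * B * (((ℓ : ℝ) + 1) ^ 3 * (3 / 4) ^ (ℓ + 1)) := by
  rw [Real.norm_eq_abs, abs_mul]
  calc |a ℓ| * |c ℓ| ≤ A * ((ℓ : ℝ) + 1) * (B * (((ℓ : ℝ) + 1) ^ 2 * (3 / 4) ^ (ℓ + 1))) :=
        mul_le_mul (ha ℓ) (hc ℓ) (abs_nonneg _) ((abs_nonneg _).trans (ha ℓ))
    _ = A * B * (((ℓ : ℝ) + 1) ^ 3 * (3 / 4) ^ (ℓ + 1)) := by ring

lemma summable_mul_of_linear_of_geometric (ha : ∀ ℓ, |a ℓ| ≤ A * ((ℓ : ℝ) + 1))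
    (hc : ∀ ℓ, |c ℓ| ≤ B * (((ℓ : ℝ) + 1) ^ 2 * (3 / 4) ^ (ℓ + 1))) :
    Summable fun ℓ => a ℓ * c ℓ :=
  ((summable_succ_pow_mul_geometric 3 (by norm_num) (by norm_num)).mul_left (A * B)).of_norm_bounded
    (norm_mul_le_of_linear_of_geometric ha hc)

lemma abs_tsum_mul_le_of_linear_of_geometric (ha : ∀ ℓ, |a ℓ| ≤ A * ((ℓ : ℝ) + 1))
    (hc : ∀ ℓ, |c ℓ| ≤ B * (((ℓ : ℝ) + 1) ^ 2 * (3 / 4) ^ (ℓ + 1))) :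
    |∑' ℓ, a ℓ * c ℓ| ≤ A * B * ∑' ℓ : ℕ, ((ℓ : ℝ) + 1) ^ 3 * (3 / 4) ^ (ℓ + 1) :=
  tsum_of_norm_bounded
    ((summable_succ_pow_mul_geometric 3 (by norm_num) (by norm_num)).hasSum.mul_left (A * B))
    (norm_mul_le_of_linear_of_geometric ha hc)

end LinearTimesGeometric

lemma abs_two_zpow_neg_succ_le (ℓ : ℕ) :
    |(2 : ℝ) ^ (-(ℓ + 1 : ℤ))| ≤ ((ℓ : ℝ) + 1) ^ 2 * (3 / 4) ^ (ℓ + 1) := by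
  rw [two_zpow_neg_succ, abs_of_pos (by positivity)]
  calc (1 / 2 : ℝ) ^ (ℓ + 1) ≤ (3 / 4) ^ (ℓ + 1) := pow_le_pow_left₀ (by norm_num) (by norm_num) _
    _ ≤ ((ℓ : ℝ) + 1) ^ 2 * (3 / 4) ^ (ℓ + 1) :=
        le_mul_of_one_le_left (by positivity) (one_le_pow₀ (by simp))

lemma abs_two_zpow_neg_succ_mul_linearized_le {ε : ℕ → ℝ} (hε : ∀ i, |ε i| ≤ 1 / 2) (r ℓ : ℕ) :
    |(2 : ℝ) ^ (-(ℓ + 1 : ℤ)) * (-ε (r + ℓ + 1) + ∑ i ∈ range ℓ, ε (r + i + 1))|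
      ≤ ((ℓ : ℝ) + 1) ^ 2 * (3 / 4) ^ (ℓ + 1) := by
  have hL : |-ε (r + ℓ + 1) + ∑ i ∈ range ℓ, ε (r + i + 1)| ≤ (ℓ + 1) / 2 := by
    linarith [abs_add_le (-ε (r + ℓ + 1)) (∑ i ∈ range ℓ, ε (r + i + 1)), abs_neg (ε (r + ℓ + 1)),
      hε (r + ℓ + 1), abs_sum_range_le (fun i => hε (r + i + 1)) ℓ]
  rw [abs_mul, two_zpow_neg_succ, abs_of_pos (by positivity)]
  calc (1 / 2 : ℝ) ^ (ℓ + 1) * |-ε (r + ℓ + 1) + ∑ i ∈ range ℓ, ε (r + i + 1)|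
      ≤ (3 / 4) ^ (ℓ + 1) * ((ℓ + 1) ^ 2) :=
        mul_le_mul (pow_le_pow_left₀ (by norm_num) (by norm_num) _)
          (hL.trans (by nlinarith [(Nat.cast_nonneg ℓ : (0 : ℝ) ≤ ℓ)]))
          (abs_nonneg _) (by positivity)
    _ = ((ℓ : ℝ) + 1) ^ 2 * (3 / 4) ^ (ℓ + 1) := mul_comm _ _

lemma abs_le_of_abs_sub_le {h : ℕ → ℝ} {r : ℕ} {A : ℝ}
    (hh : ∀ ℓ, |h (r + ℓ + 1) - h r| ≤ A * ((ℓ : ℝ) + 1)) (ℓ : ℕ) :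
    |h (r + ℓ + 1)| ≤ (|h r| + A) * ((ℓ : ℝ) + 1) := by
  nlinarith [hh ℓ, abs_sub_abs_le_abs_sub (h (r + ℓ + 1)) (h r),
    mul_nonneg (abs_nonneg (h r)) (Nat.cast_nonneg ℓ : (0 : ℝ) ≤ ℓ)]

lemma Qeps_sub_Q0_sub_Rtilde_eq_tsum {ε : ℕ → ℝ} (hε : ∀ i, |ε i| ≤ 1 / 2) {h : ℕ → ℝ} {r : ℕ}
    {A : ℝ} (hh : ∀ ℓ, |h (r + ℓ + 1) - h r| ≤ A * ((ℓ : ℝ) + 1)) :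
    (Qeps ε h r - Q0 h r) - Rtilde ε h r
      = ∑' ℓ, (h (r + ℓ + 1) - h r) * cookieDefect ε r ℓ := by
  have hgrowth := abs_le_of_abs_sub_le hh
  have hQ0 : Summable fun ℓ : ℕ => h (r + ℓ + 1) * (2 : ℝ) ^ (-(ℓ + 1 : ℤ)) :=
    summable_mul_of_linear_of_geometric hgrowth (B := 1)
      fun ℓ => (abs_two_zpow_neg_succ_le ℓ).trans_eq (one_mul _).symm
  have hR : Summable fun ℓ : ℕ => h (r + ℓ + 1) * (2 : ℝ) ^ (-(ℓ + 1 : ℤ)) *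
      (-ε (r + ℓ + 1) + ∑ i ∈ range ℓ, ε (r + i + 1)) := by
    simpa only [mul_assoc] using summable_mul_of_linear_of_geometric hgrowth (B := 1)
      fun ℓ => (abs_two_zpow_neg_succ_mul_linearized_le hε r ℓ).trans_eq (one_mul _).symm
  have hD : Summable fun ℓ => h (r + ℓ + 1) * cookieDefect ε r ℓ :=
    summable_mul_of_linear_of_geometric hgrowth (B := (1 / 2) ^ 2) fun ℓ =>
      (abs_cookieDefect_le (by norm_num) hε r ℓ).trans (le_of_eq (by norm_num))
  have hD0 := hasSum_cookieDefect (by norm_num : (1 / 2 : ℝ) < 1) hε r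
  have hQ : Summable fun ℓ : ℕ => h (r + ℓ + 1) * ((2 : ℝ) ^ (-(ℓ + 1 : ℤ))
      * (∏ i ∈ range ℓ, (1 + ε (r + i + 1))) * (1 - ε (r + ℓ + 1))) :=
    ((hD.add hQ0).add hR).congr fun ℓ => by rw [cookieDefect]; ring
  have hdiff : Summable fun ℓ => (h (r + ℓ + 1) - h r) * cookieDefect ε r ℓ :=
    (hD.sub (hD0.summable.mul_left (h r))).congr fun ℓ => by ring
  have hsplit := hdiff.hasSum.add (hD0.mul_left (h r))
  rw [mul_zero, add_zero] at hsplit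
  exact ((hQ.hasSum.sub hQ0.hasSum).sub hR.hasSum).unique
    (hsplit.congr_fun fun ℓ => by rw [cookieDefect]; ring)

lemma abs_sub_le_of_lipschitz {f : ℕ → ℝ} {K : ℝ}
    (hf : ∀ r r' : ℕ, |f r - f r'| ≤ K * |(r : ℝ) - r'|) (r ℓ : ℕ) :
    |f (r + ℓ + 1) - f r| ≤ K * ((ℓ : ℝ) + 1) := by
  have hdist : |((r + ℓ + 1 : ℕ) : ℝ) - r| = ℓ + 1 := by
    push_cast; rw [add_assoc, add_sub_cancel_left, abs_of_pos (by positivity)]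
  simpa only [hdist] using hf (r + ℓ + 1) r

section AffineIncrement

variable {f g : ℕ → ℝ} {Kf Kg Mg : ℝ}

lemma abs_sub_add_succ_mul_le (hf : ∀ r r' : ℕ, |f r - f r'| ≤ Kf * |(r : ℝ) - r'|)
    (hgM : ∀ r, |g r| ≤ Mg) (r ℓ : ℕ) :
    |f (r + ℓ + 1) - f r + ((ℓ : ℝ) + 1) * g (r + ℓ + 1)| ≤ (Kf + Mg) * ((ℓ : ℝ) + 1) := by
  have hgℓ : |((ℓ : ℝ) + 1) * g (r + ℓ + 1)| ≤ Mg * ((ℓ : ℝ) + 1) := by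
    rw [abs_mul, abs_of_pos (by positivity), mul_comm]; gcongr; exact hgM _
  linarith [abs_add_le (f (r + ℓ + 1) - f r) (((ℓ : ℝ) + 1) * g (r + ℓ + 1)),
    abs_sub_le_of_lipschitz hf r ℓ]

lemma abs_affine_increment_le (hf : ∀ r r' : ℕ, |f r - f r'| ≤ Kf * |(r : ℝ) - r'|)
    (hg : ∀ r r' : ℕ, |g r - g r'| ≤ Kg * |(r : ℝ) - r'|) (hgM : ∀ r, |g r| ≤ Mg) (r ℓ : ℕ) :
    |(f (r + ℓ + 1) + ((r + ℓ + 1 : ℕ) : ℝ) * g (r + ℓ + 1)) - (f r + r * g r)|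
      ≤ (Kf + Mg + r * Kg) * ((ℓ : ℝ) + 1) := by
  have hsplit : (f (r + ℓ + 1) + ((r + ℓ + 1 : ℕ) : ℝ) * g (r + ℓ + 1)) - (f r + r * g r)
      = (f (r + ℓ + 1) - f r + ((ℓ : ℝ) + 1) * g (r + ℓ + 1)) + r * (g (r + ℓ + 1) - g r) := by
    push_cast; ring
  have hG : |r * (g (r + ℓ + 1) - g r)| ≤ r * (Kg * ((ℓ : ℝ) + 1)) := by
    rw [abs_mul, Nat.abs_cast]; gcongr; exact abs_sub_le_of_lipschitz hg r ℓ
  rw [hsplit]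
  linarith [abs_add_le (f (r + ℓ + 1) - f r + ((ℓ : ℝ) + 1) * g (r + ℓ + 1))
    (r * (g (r + ℓ + 1) - g r)), abs_sub_add_succ_mul_le hf hgM r ℓ]

end AffineIncrement

theorem stmt_15 :
    ∃ C : ℝ, 0 < C ∧
      ∀ ε : ℕ → ℝ, (∀ i, |ε i| ≤ 1 / 2) →
        ∀ f g : ℕ → ℝ, ∀ Kf Kg Mg : ℝ, 0 ≤ Kf → 0 ≤ Kg → 0 ≤ Mg →
          (∀ r r' : ℕ, |f r - f r'| ≤ Kf * |(r : ℝ) - r'|) →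
          (∀ r r' : ℕ, |g r - g r'| ≤ Kg * |(r : ℝ) - r'|) →
          (∀ r : ℕ, |g r| ≤ Mg) →
          ∃ fε gε : ℕ → ℝ,
            (∀ r : ℕ,
              (Qeps ε (fun r => f r + r * g r) r - Q0 (fun r => f r + r * g r) r)
                - Rtilde ε (fun r => f r + r * g r) r = fε r + r * gε r) ∧
            (∀ r : ℕ, |fε r| ≤ C * (Kf + Mg) * (⨆ j, |ε j|) ^ 2) ∧
            (∀ r : ℕ, |gε r| ≤ C * Kg * (⨆ j, |ε j|) ^ 2) := by
  have hC := summable_succ_pow_mul_geometric 3 (q := 3 / 4) (by norm_num) (by norm_num)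
  refine ⟨_, hC.tsum_pos (fun ℓ => by positivity) 0 (by norm_num), ?_⟩
  intro ε hε f g Kf Kg Mg _ _ _ hf hg hgM
  have hD := abs_cookieDefect_le_iSup hε
  have hF := abs_sub_add_succ_mul_le hf hgM
  have hG := abs_sub_le_of_lipschitz hg
  refine ⟨fun r => ∑' ℓ, (f (r + ℓ + 1) - f r + ((ℓ : ℝ) + 1) * g (r + ℓ + 1)) * cookieDefect ε r ℓ,
    fun r => ∑' ℓ, (g (r + ℓ + 1) - g r) * cookieDefect ε r ℓ,
    fun r => ?_, fun r => ?_, fun r => ?_⟩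
  · have hFs := summable_mul_of_linear_of_geometric (hF r) (hD r)
    have hGs := summable_mul_of_linear_of_geometric (hG r) (hD r)
    rw [Qeps_sub_Q0_sub_Rtilde_eq_tsum (h := fun r => f r + r * g r) hε
        (abs_affine_increment_le hf hg hgM r),
      ← hGs.tsum_mul_left, ← hFs.tsum_add (hGs.mul_left _)]
    exact tsum_congr fun ℓ => by push_cast; ring
  · exact (abs_tsum_mul_le_of_linear_of_geometric (hF r) (hD r)).trans_eq (by ring)
  · exact (abs_tsum_mul_le_of_linear_of_geometric (hG r) (hD r)).trans_eq (by ring)
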